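/- Let R be a Cohen-Macaulay commutative Noetherian local ring. Let X be a full subcategory of maximal Cohen-Macaulay R-modules (closed under isomorphism and direct summands) that contains R and is thick: for every short exact sequence 0 → L → M → N → 0 of maximal Cohen-Macaulay R-modules, if two of L, M, N are in X then so is the third. Then X is a resolving subcategory of finitely generated R-modules: it is closed under extensions and kernels of epimorphisms within all finitely generated modules. -/

import Mathlib

open CategoryTheory IsLocalRing

noncomputable section

variable (R : Type) [CommRing R] [IsLocalRing R]

/-- The depth of a module over a Noetherian local ring: the supremum of the
lengths of (weakly) regular sequences on `M` contained in the maximal ideal.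
With this definition `depth 0 = ∞`. -/
noncomputable def mdepth (M : Type) [AddCommGroup M] [Module R M] : ℕ∞ :=
  ⨆ (rs : List R) (_ : (∀ r ∈ rs, r ∈ maximalIdeal R) ∧
    RingTheory.Sequence.IsWeaklyRegular M rs), (rs.length : ℕ∞)

/-- A finitely generated module is maximal Cohen-Macaulay if its depth is at
least the Krull dimension of the ring. -/
def IsMCM (M : Type) [AddCommGroup M] [Module R M] : Prop :=
  Module.Finite R M ∧ ringKrullDim R ≤ (mdepth R M : WithBot ℕ∞)

/-!
Depth is read off from the vanishing of `Ext^i(k, -)` (Rees' theorem), so the long exact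
`Ext(k, -)` sequence of `0 → A → B → C → 0` gives `depth B ≥ min (depth A) (depth C)` and
`depth A ≥ min (depth B) (depth C + 1)`. Hence extensions of maximal Cohen-Macaulay modules and
kernels of epimorphisms between them are again maximal Cohen-Macaulay, and thickness of `X`
inside maximal Cohen-Macaulay modules yields both closure properties.
-/

namespace CategoryTheory.Abelian.Ext

variable {C : Type*} [Category C] [Abelian C] [HasExt C] {S : ShortComplex C}

lemma subsingleton_of_shortExact_X₂ (hS : S.ShortExact) (X : C) {n : ℕ}
    [Subsingleton (Ext X S.X₁ n)] [Subsingleton (Ext X S.X₃ n)] :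
    Subsingleton (Ext X S.X₂ n) := by
  refine subsingleton_of_forall_eq 0 fun x => ?_
  obtain ⟨y, rfl⟩ := covariant_sequence_exact₂ X hS x (Subsingleton.elim _ _)
  rw [Subsingleton.elim y 0, zero_comp]

lemma subsingleton_of_shortExact_X₁_zero (hS : S.ShortExact) (X : C)
    [Subsingleton (Ext X S.X₂ 0)] : Subsingleton (Ext X S.X₁ 0) :=
  have := hS.mono_f
  (postcomp_mk₀_injective_of_mono X S.f).subsingleton

lemma subsingleton_of_shortExact_X₁_succ (hS : S.ShortExact) (X : C) {n : ℕ}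
    [Subsingleton (Ext X S.X₂ (n + 1))] [Subsingleton (Ext X S.X₃ n)] :
    Subsingleton (Ext X S.X₁ (n + 1)) := by
  refine subsingleton_of_forall_eq 0 fun x => ?_
  obtain ⟨y, rfl⟩ := covariant_sequence_exact₁ X hS x (Subsingleton.elim _ _) rfl
  rw [Subsingleton.elim y 0, zero_comp]

lemma subsingleton_of_isZero_right {X Y : C} (hY : Limits.IsZero Y) (n : ℕ) :
    Subsingleton (Ext X Y n) := by
  refine subsingleton_of_forall_eq 0 fun x => ?_
  rw [← x.comp_mk₀_id, hY.eq_of_src (𝟙 Y) 0, mk₀_zero, comp_zero]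

end CategoryTheory.Abelian.Ext

section Depth

open RingTheory.Sequence CategoryTheory.Abelian

variable {R}

lemma IsWeaklyRegular.of_subsingleton {S M : Type*} [CommRing S] [AddCommGroup M] [Module S M]
    [Subsingleton M] (rs : List S) : IsWeaklyRegular M rs :=
  ⟨fun _ _ _ _ _ => Subsingleton.elim _ _⟩

lemma le_mdepth_iff {M : Type} [AddCommGroup M] [Module R M] {n : ℕ} :
    (n : ℕ∞) ≤ mdepth R M ↔ ∃ rs : List R, rs.length = n ∧
      (∀ r ∈ rs, r ∈ maximalIdeal R) ∧ IsWeaklyRegular M rs := by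
  refine ⟨fun h => ?_, fun ⟨rs, hlen, hmem, hreg⟩ =>
    hlen ▸ le_iSup₂_of_le rs ⟨hmem, hreg⟩ le_rfl⟩
  cases n with
  | zero => exact ⟨[], rfl, by simp, IsWeaklyRegular.nil R M⟩
  | succ k =>
    obtain ⟨rs, ⟨hmem, hreg⟩, hlen⟩ : ∃ rs : List R, ((∀ r ∈ rs, r ∈ maximalIdeal R) ∧
        IsWeaklyRegular M rs) ∧ (k : ℕ∞) < rs.length := by
      simpa only [mdepth, lt_iSup_iff, exists_prop] using
        (ENat.natCast_lt_natCast.mpr k.lt_succ_self).trans_le h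
    have hlen : k < rs.length := ENat.natCast_lt_natCast.mp hlen
    refine ⟨rs.take (k + 1), by rw [List.length_take]; omega, fun r hr => hmem r (List.mem_of_mem_take hr), ?_⟩
    exact ((isWeaklyRegular_append_iff M _ (rs.drop (k + 1))).mp
      (by rwa [List.take_append_drop])).1

/-- Rees' theorem; the residue field appears as a `Shrink` because
`ModuleCat.exists_isRegular_tfae` is stated that way. -/
lemma le_mdepth_iff_subsingleton_ext [IsNoetherianRing R] (M : Type) [AddCommGroup M]
    [Module R M] [Module.Finite R M] (n : ℕ) :
    (n : ℕ∞) ≤ mdepth R M ↔ ∀ i < n, Subsingleton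
      (Ext (ModuleCat.of R (Shrink.{0} (R ⧸ maximalIdeal R))) (ModuleCat.of R M) i) := by
  rcases subsingleton_or_nontrivial M with hM | hM
  · exact iff_of_true
      (le_mdepth_iff.mpr
        ⟨List.replicate n 0, by simp, by simp, IsWeaklyRegular.of_subsingleton _⟩)
      fun i _ => Ext.subsingleton_of_isZero_right (ModuleCat.isZero_of_subsingleton _) i
  · have smul_lt : maximalIdeal R • (⊤ : Submodule R M) < ⊤ :=
      (Submodule.top_ne_ideal_smul_of_le_jacobson_annihilator
        (maximalIdeal_le_jacobson _)).symm.lt_top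
    rw [le_mdepth_iff]
    refine Iff.trans ?_ ((ModuleCat.exists_isRegular_tfae _ n (.of R M) smul_lt).out 3 1)
    exact exists_congr fun rs => and_congr_right fun _ => and_congr_right fun h =>
      (isRegular_iff_isWeaklyRegular_of_subset_maximalIdeal h).symm

variable [IsNoetherianRing R] {A B C : Type} [AddCommGroup A] [Module R A] [AddCommGroup B]
  [Module R B] [AddCommGroup C] [Module R C] [Module.Finite R A] [Module.Finite R B]
  [Module.Finite R C] {f : A →ₗ[R] B} {g : B →ₗ[R] C}

lemma min_mdepth_le_mdepth_middle (hf : Function.Injective f) (hg : Function.Surjective g)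
    (hfg : Function.Exact f g) : min (mdepth R A) (mdepth R C) ≤ mdepth R B := by
  have hS := ModuleCat.shortComplex_shortExact
    (ModuleCat.shortComplexOfCompEqZero f g hfg.linearMap_comp_eq_zero) hfg hf hg
  refine ENat.forall_natCast_le_iff_le.mp fun n hn => ?_
  rw [le_min_iff, le_mdepth_iff_subsingleton_ext, le_mdepth_iff_subsingleton_ext] at hn
  rw [le_mdepth_iff_subsingleton_ext]
  intro i hi
  have := hn.1 i hi
  have := hn.2 i hi
  exact Ext.subsingleton_of_shortExact_X₂ hS _

lemma min_mdepth_le_mdepth_left (hf : Function.Injective f) (hg : Function.Surjective g)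
    (hfg : Function.Exact f g) : min (mdepth R B) (mdepth R C + 1) ≤ mdepth R A := by
  have hS := ModuleCat.shortComplex_shortExact
    (ModuleCat.shortComplexOfCompEqZero f g hfg.linearMap_comp_eq_zero) hfg hf hg
  refine ENat.forall_natCast_le_iff_le.mp fun n hn => ?_
  obtain ⟨hB, hC⟩ := le_min_iff.mp hn
  rw [le_mdepth_iff_subsingleton_ext] at hB ⊢
  rintro (_ | i) hi
  · have := hB 0 hi
    exact Ext.subsingleton_of_shortExact_X₁_zero hS _
  · have := hB (i + 1) hi
    have hiC : ((i + 1 : ℕ) : ℕ∞) ≤ mdepth R C := by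
      rw [← ENat.add_le_add_iff_right ENat.one_ne_top]
      exact le_trans (by exact_mod_cast hi) hC
    have := (le_mdepth_iff_subsingleton_ext C (i + 1)).mp hiC i i.lt_succ_self
    exact Ext.subsingleton_of_shortExact_X₁_succ hS _

end Depth

section MCM

variable {R} [IsNoetherianRing R] {A B C : Type} [AddCommGroup A] [Module R A] [AddCommGroup B]
  [Module R B] [AddCommGroup C] [Module R C] {f : A →ₗ[R] B} {g : B →ₗ[R] C}

lemma IsMCM.of_exact_middle [Module.Finite R B] (hA : IsMCM R A) (hC : IsMCM R C)
    (hf : Function.Injective f) (hg : Function.Surjective g) (hfg : Function.Exact f g) :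
    IsMCM R B :=
  have := hA.1
  have := hC.1
  ⟨inferInstance, (le_inf hA.2 hC.2).trans
    (WithBot.coe_le_coe.mpr (min_mdepth_le_mdepth_middle hf hg hfg))⟩

lemma IsMCM.of_exact_left [Module.Finite R A] (hB : IsMCM R B) (hC : IsMCM R C)
    (hf : Function.Injective f) (hg : Function.Surjective g) (hfg : Function.Exact f g) :
    IsMCM R A :=
  have := hB.1
  have := hC.1
  ⟨inferInstance, (le_inf hB.2 hC.2).trans <| WithBot.coe_le_coe.mpr <|
    (min_le_min_left _ le_self_add).trans (min_mdepth_le_mdepth_left hf hg hfg)⟩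

end MCM

theorem thick_subcategory_of_CM_is_resolving
    [IsNoetherianRing R]
    (X : Set (ModuleCat.{0} R))
    (hmem : ∀ A ∈ X, IsMCM R ↥A)
    (hthick : ∀ (A B C : ModuleCat.{0} R) (f : A →ₗ[R] B) (g : B →ₗ[R] C),
      IsMCM R ↥A → IsMCM R ↥B → IsMCM R ↥C →
      Function.Injective f → Function.Surjective g →
      LinearMap.range f = LinearMap.ker g →
      ((A ∈ X ∧ B ∈ X → C ∈ X) ∧ (A ∈ X ∧ C ∈ X → B ∈ X) ∧
        (B ∈ X ∧ C ∈ X → A ∈ X))) :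
    (∀ (A B C : ModuleCat.{0} R) (f : A →ₗ[R] B) (g : B →ₗ[R] C),
      Module.Finite R ↥A → Module.Finite R ↥B → Module.Finite R ↥C →
      Function.Injective f → Function.Surjective g →
      LinearMap.range f = LinearMap.ker g → A ∈ X → C ∈ X → B ∈ X) ∧
    (∀ (A B C : ModuleCat.{0} R) (f : A →ₗ[R] B) (g : B →ₗ[R] C),
      Module.Finite R ↥A → Module.Finite R ↥B → Module.Finite R ↥C →
      Function.Injective f → Function.Surjective g →
      LinearMap.range f = LinearMap.ker g → B ∈ X → C ∈ X → A ∈ X) := by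
  refine ⟨fun A B C f g _ _ _ hf hg hfg hA hC => ?_, fun A B C f g _ _ _ hf hg hfg hB hC => ?_⟩
  · have hB := (hmem A hA).of_exact_middle (hmem C hC) hf hg (LinearMap.exact_iff.mpr hfg.symm)
    exact (hthick A B C f g (hmem A hA) hB (hmem C hC) hf hg hfg).2.1 ⟨hA, hC⟩
  · have hA := (hmem B hB).of_exact_left (hmem C hC) hf hg (LinearMap.exact_iff.mpr hfg.symm)
    exact (hthick A B C f g hA (hmem B hB) (hmem C hC) hf hg hfg).2.2 ⟨hB, hC⟩
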